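/- arXiv:2111.07761 — 3 statements merged into one kernel-verified Lean document; each statement's English description precedes it below -/
import Mathlib

section
/- For any two vertex-labeled graphs G and H with uniform edit costs c_v = c_vl = c_e = 1: SLF(G,H) ≤ CLB(G,H) ≤ BranchLB(G,H) ≤ GED(G,H), where SLF(G,H) = max(|V(G)|,|V(H)|) − |L_V(G) ∩ L_V(H)| + ||E(G)| − |E(H)|| counts minimal label mismatches plus edge count difference, and BranchLB is the optimal assignment cost under ground cost c_branch = c_llb + c_dlb. -/
open scoped Classical

/-- A labeled graph: finite vertex set (of natural-number names), finite loop-free edge set,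
vertex and edge labeling functions. -/
structure LGraph (Lv Le : Type) where
  verts : Finset ℕ
  edges : Finset (Sym2 ℕ)
  vl : ℕ → Lv
  el : Sym2 ℕ → Le

namespace LGraph

variable {Lv Le : Type}

/-- Well-formedness: edges are loop-free and their endpoints are vertices. -/
def WF (G : LGraph Lv Le) : Prop :=
  (∀ e ∈ G.edges, ¬ e.IsDiag) ∧ ∀ e ∈ G.edges, ∀ v ∈ e, v ∈ G.verts

/-- The degree of a vertex: the number of incident edges. -/
noncomputable def degree (G : LGraph Lv Le) (v : ℕ) : ℕ :=
  (G.edges.filter fun e => v ∈ e).card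

/-- Edit operations: insert/delete/relabel a vertex, insert/delete/relabel an edge. -/
inductive Op (Lv Le : Type) where
  | addV (v : ℕ) (l : Lv)
  | delV (v : ℕ)
  | relV (v : ℕ) (l : Lv)
  | addE (u v : ℕ) (l : Le)
  | delE (e : Sym2 ℕ)
  | relE (e : Sym2 ℕ) (l : Le)

/-- Applying an edit operation to a graph; `none` if the operation is invalid
(e.g. deleting a non-isolated vertex). -/
noncomputable def apply (o : Op Lv Le) (G : LGraph Lv Le) : Option (LGraph Lv Le) :=
  match o with
  | .addV v l => if v ∈ G.verts then none else
      some ⟨insert v G.verts, G.edges, Function.update G.vl v l, G.el⟩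
  | .delV v => if v ∈ G.verts ∧ ∀ e ∈ G.edges, v ∉ e then
      some ⟨G.verts.erase v, G.edges, G.vl, G.el⟩ else none
  | .relV v l => if v ∈ G.verts then
      some ⟨G.verts, G.edges, Function.update G.vl v l, G.el⟩ else none
  | .addE u v l => if u ∈ G.verts ∧ v ∈ G.verts ∧ u ≠ v ∧ s(u, v) ∉ G.edges then
      some ⟨G.verts, insert s(u, v) G.edges, G.vl, Function.update G.el s(u, v) l⟩ else none
  | .delE e => if e ∈ G.edges then
      some ⟨G.verts, G.edges.erase e, G.vl, G.el⟩ else none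
  | .relE e l => if e ∈ G.edges then
      some ⟨G.verts, G.edges, G.vl, Function.update G.el e l⟩ else none

/-- Applying a sequence of edit operations (an edit path). -/
noncomputable def applyList : List (Op Lv Le) → LGraph Lv Le → Option (LGraph Lv Le)
  | [], G => some G
  | o :: os, G => (apply o G).bind (applyList os)

/-- Cost of a single edit operation, with vertex insertion/deletion cost `cv`, vertex
relabeling cost `cvl`, edge insertion/deletion cost `ce` and edge relabeling cost `cel`. -/
def opCost (cv cvl ce cel : ℝ) : Op Lv Le → ℝ
  | .addV _ _ => cv
  | .delV _ => cv
  | .relV _ _ => cvl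
  | .addE _ _ _ => ce
  | .delE _ => ce
  | .relE _ _ => cel

/-- Graph isomorphism: a bijection of the vertex sets preserving labels, adjacency and
edge labels. -/
def Iso (G H : LGraph Lv Le) : Prop :=
  ∃ f : ℕ → ℕ, Set.BijOn f ↑G.verts ↑H.verts ∧
    (∀ v ∈ G.verts, H.vl (f v) = G.vl v) ∧
    (∀ u ∈ G.verts, ∀ v ∈ G.verts, (s(u, v) ∈ G.edges ↔ s(f u, f v) ∈ H.edges)) ∧
    (∀ u ∈ G.verts, ∀ v ∈ G.verts, s(u, v) ∈ G.edges → H.el s(f u, f v) = G.el s(u, v))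

/-- The graph edit distance: the infimum of the total cost over all edit paths
transforming `G` into a graph isomorphic to `H`. -/
noncomputable def GED (cv cvl ce cel : ℝ) (G H : LGraph Lv Le) : ℝ :=
  sInf {r | ∃ (ops : List (Op Lv Le)) (H' : LGraph Lv Le),
    applyList ops G = some H' ∧ Iso H' H ∧ r = (ops.map (opCost cv cvl ce cel)).sum}

/-- The vertex set of `G` padded with one dummy vertex (`Sum.inr`) for every vertex
of `H`, so that the padded vertex sets of `G` and `H` have equal cardinality. -/
abbrev PadV (G H : LGraph Lv Le) : Type := {x // x ∈ G.verts} ⊕ {x // x ∈ H.verts}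

/-- Ground cost `c_llb`: 0 for equal labels or two dummies, `cvl` for distinct labels,
`cv` for matching a vertex with a dummy. -/
noncomputable def cllb (cv cvl : ℝ) (G H : LGraph Lv Le) : PadV G H → PadV H G → ℝ
  | .inl u, .inl v => if G.vl u.1 = H.vl v.1 then 0 else cvl
  | .inl _, .inr _ => cv
  | .inr _, .inl _ => cv
  | .inr _, .inr _ => 0

/-- Degree of a padded vertex; dummies have degree 0. -/
noncomputable def padDeg (G H : LGraph Lv Le) : PadV G H → ℕ
  | .inl u => G.degree u.1
  | .inr _ => 0

/-- Ground cost `c_dlb(u,v) = (ce/2)·|δ(u) − δ(v)|`. -/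
noncomputable def cdlb (ce : ℝ) (G H : LGraph Lv Le) (x : PadV G H) (y : PadV H G) : ℝ :=
  ce / 2 * |(padDeg G H x : ℝ) - (padDeg H G y : ℝ)|

/-- Optimal assignment cost between the padded vertex sets of `G` and `H` under a ground
cost `c`: the minimum over all bijections `f` of `∑ x, c x (f x)`. -/
noncomputable def oaCost (G H : LGraph Lv Le) (c : PadV G H → PadV H G → ℝ) : ℝ :=
  sInf {r | ∃ f : PadV G H ≃ PadV H G, r = ∑ x, c x (f x)}

/-- The label lower bound. -/
noncomputable def LLB (cv cvl : ℝ) (G H : LGraph Lv Le) : ℝ :=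
  oaCost G H (cllb cv cvl G H)

/-- The degree lower bound. -/
noncomputable def DLB (ce : ℝ) (G H : LGraph Lv Le) : ℝ :=
  oaCost G H (cdlb ce G H)

/-- The combined lower bound `CLB = LLB + DLB`. -/
noncomputable def CLB (cv cvl ce : ℝ) (G H : LGraph Lv Le) : ℝ :=
  LLB cv cvl G H + DLB ce G H

end LGraph

namespace LGraph

/-- The simple label filter with unit costs:
`max(|V(G)|,|V(H)|) − |L_V(G) ∩ L_V(H)| + ||E(G)| − |E(H)||`, where `L_V` denotes the
multiset of vertex labels and `∩` the multiset intersection. -/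
noncomputable def SLF {Lv Le : Type} (G H : LGraph Lv Le) : ℝ :=
  ((max G.verts.card H.verts.card : ℕ) : ℝ)
    - ((G.verts.val.map G.vl) ∩ (H.verts.val.map H.vl)).card
    + |(G.edges.card : ℝ) - (H.edges.card : ℝ)|

/-- The branch lower bound: the optimal assignment cost under the single ground cost
`c_branch = c_llb + c_dlb` (with unit costs). -/
noncomputable def BranchLB {Lv Le : Type} (G H : LGraph Lv Le) : ℝ :=
  oaCost G H (fun x y => cllb 1 1 G H x y + cdlb 1 G H x y)

/-!
With unit costs, `c_llb + c_dlb` depends only on the label and the degree of the two padded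
vertices (a dummy having no label and degree 0), and as a function of these attributes it is a
pseudometric.

`SLF ≤ CLB`: in any assignment a pair costs no label mismatch only if it matches two equally
labelled vertices (an injective, label-preserving matching, hence at most `|L_V(G) ∩ L_V(H)|`
pairs) or two dummies (at most `min(|V(G)|, |V(H)|)` pairs); and by the handshake lemma the
degree costs add up to at least `||E(G)| - |E(H)||`. `CLB ≤ BranchLB` is superadditivity of the
minimum. For `BranchLB ≤ GED`, one edit operation changes the optimal branch cost against a fixed
graph by at most its own cost: relabellings and edge edits move the vertex attributes by total
distance at most 1, and inserting or deleting an isolated vertex adds or removes one pair of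
cost 1 between that vertex and a dummy (rerouting through that pair by the triangle inequality in
one direction). Summing along an edit path ending in a graph isomorphic to `H`, and using that
the branch cost of a graph against itself is 0 and is invariant under isomorphism, gives the
bound.
-/

end LGraph

section Assignment

variable {α β α' β' X : Type*} [Fintype α] [Fintype α']

/-- Junk value `0` when there is no bijection `α ≃ β`; the lower bounds below assume one. -/
noncomputable def assignmentCost (c : α → β → ℝ) : ℝ :=
  ⨅ f : α ≃ β, ∑ x, c x (f x)

theorem assignmentCost_le (c : α → β → ℝ) (f : α ≃ β) :
    assignmentCost c ≤ ∑ x, c x (f x) :=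
  ciInf_le (Set.finite_range _).bddBelow f

theorem exists_assignmentCost_eq [Nonempty (α ≃ β)] (c : α → β → ℝ) :
    ∃ f : α ≃ β, assignmentCost c = ∑ x, c x (f x) := by
  obtain ⟨f, hf⟩ := exists_eq_ciInf_of_finite (f := fun f : α ≃ β => ∑ x, c x (f x))
  exact ⟨f, hf.symm⟩

theorem assignmentCost_le_add_of_forall_exists [Nonempty (α' ≃ β')] {c : α → β → ℝ}
    {c' : α' → β' → ℝ} {δ : ℝ}
    (h : ∀ g : α' ≃ β', ∃ f : α ≃ β, ∑ x, c x (f x) ≤ δ + ∑ y, c' y (g y)) :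
    assignmentCost c ≤ δ + assignmentCost c' := by
  obtain ⟨g, hg⟩ := exists_assignmentCost_eq c'
  obtain ⟨f, hf⟩ := h g
  rw [hg]
  exact (assignmentCost_le c f).trans hf

theorem add_assignmentCost_le [Nonempty (α ≃ β)] (c₁ c₂ : α → β → ℝ) :
    assignmentCost c₁ + assignmentCost c₂ ≤ assignmentCost (fun x y => c₁ x y + c₂ x y) := by
  obtain ⟨f, hf⟩ := exists_assignmentCost_eq fun x y => c₁ x y + c₂ x y
  rw [hf, Finset.sum_add_distrib]
  exact add_le_add (assignmentCost_le c₁ f) (assignmentCost_le c₂ f)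

theorem assignmentCost_comp_equiv (eα : α ≃ α') (eβ : β ≃ β') (c : α' → β' → ℝ) :
    assignmentCost (fun x y => c (eα x) (eβ y)) = assignmentCost c :=
  Equiv.iInf_congr (eα.equivCongr eβ) fun f => by
    simpa using (Equiv.sum_comp eα fun x' => c x' (eβ (f (eα.symm x')))).symm

theorem assignmentCost_le_add_some [Nonempty (α ≃ β)] (c : Option α → Option β → ℝ) :
    assignmentCost c ≤ c none none + assignmentCost (fun x y => c (some x) (some y)) :=
  assignmentCost_le_add_of_forall_exists fun g => ⟨g.optionCongr, by simp [Fintype.sum_option]⟩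

theorem assignmentCost_le_sum_add [Nonempty (α ≃ β)] {d : X → X → ℝ}
    (hd : ∀ p q r, d p r ≤ d p q + d q r) (a a' : α → X) (b : β → X) :
    assignmentCost (fun x y => d (a x) (b y))
      ≤ ∑ x, d (a x) (a' x) + assignmentCost (fun x y => d (a' x) (b y)) :=
  assignmentCost_le_add_of_forall_exists fun g => ⟨g, by
    rw [← Finset.sum_add_distrib]
    exact Finset.sum_le_sum fun x _ => hd _ _ _⟩

theorem sum_removeNone_le {d : X → X → ℝ} (hd : ∀ p q r, d p r ≤ d p q + d q r)
    (hd₀ : ∀ p q, 0 ≤ d p q) (e : Option α ≃ Option β) (a : Option α → X) (b : Option β → X) :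
    ∑ x, d (a (some x)) (b (some (e.removeNone x)))
      ≤ d (b none) (a none) + ∑ o, d (a o) (b (e o)) := by
  set C := d (b none) (a none) + d (a none) (b (e none))
  have hpt : ∀ x, d (a (some x)) (b (some (e.removeNone x)))
      ≤ d (a (some x)) (b (e (some x))) + if e (some x) = none then C else 0 := by
    intro x
    split_ifs with hx
    · rw [Equiv.removeNone_none e hx, hx]
      linarith [hd (a (some x)) (b none) (b (e none)), hd (b none) (a none) (b (e none))]
    · rw [Equiv.removeNone_some e (Option.ne_none_iff_exists'.1 hx), add_zero]
  -- `e` sends at most one `some x` to `none`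
  have hcount : ∑ x, (if e (some x) = none then C else 0) ≤ C := by
    rw [Finset.sum_ite, Finset.sum_const_zero, add_zero, Finset.sum_const, nsmul_eq_mul]
    refine mul_le_of_le_one_left (add_nonneg (hd₀ _ _) (hd₀ _ _)) ?_
    refine Nat.cast_le_one.2 (Finset.card_le_one.2 fun x hx y hy => ?_)
    rw [Finset.mem_filter] at hx hy
    exact Option.some_injective _ (e.injective (hx.2.trans hy.2.symm))
  calc _ ≤ ∑ x, (d (a (some x)) (b (e (some x))) + if e (some x) = none then C else 0) :=
        Finset.sum_le_sum fun x _ => hpt x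
    _ ≤ _ := by
        rw [Finset.sum_add_distrib, Fintype.sum_option]
        linarith

theorem assignmentCost_some_le [Nonempty (Option α ≃ Option β)] {d : X → X → ℝ}
    (hd : ∀ p q r, d p r ≤ d p q + d q r) (hd₀ : ∀ p q, 0 ≤ d p q) (a : Option α → X)
    (b : Option β → X) :
    assignmentCost (fun x y => d (a (some x)) (b (some y)))
      ≤ d (b none) (a none) + assignmentCost (fun o p => d (a o) (b p)) :=
  assignmentCost_le_add_of_forall_exists fun e => ⟨e.removeNone, sum_removeNone_le hd hd₀ e a b⟩

end Assignment

theorem Multiset.card_le_card_inter_map {σ α β L : Type*} [Fintype σ] [Fintype α] [Fintype β]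
    [DecidableEq L] (a : α → L) (b : β → L) (i : σ ↪ α) (j : σ ↪ β)
    (h : ∀ s, a (i s) = b (j s)) :
    Fintype.card σ ≤ ((Finset.univ.val.map a) ∩ (Finset.univ.val.map b)).card := by
  have ha : Finset.univ.val.map (a ∘ i) ≤ Finset.univ.val.map a := by
    rw [← Multiset.map_map, ← Finset.map_val]
    exact Multiset.map_le_map (Finset.val_le_iff.2 (Finset.subset_univ _))
  have hb : Finset.univ.val.map (a ∘ i) ≤ Finset.univ.val.map b := by
    rw [show a ∘ i = b ∘ j from funext h, ← Multiset.map_map, ← Finset.map_val]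
    exact Multiset.map_le_map (Finset.val_le_iff.2 (Finset.subset_univ _))
  simpa using Multiset.card_le_card (Multiset.le_inter ha hb)

theorem Finset.univ_val_map_coe {α β : Type*} (s : Finset α) (f : α → β) :
    (Finset.univ : Finset {x // x ∈ s}).val.map (fun u : {x // x ∈ s} => f u) = s.val.map f := by
  simp only [Finset.univ_eq_attach, Finset.attach_val]
  exact Multiset.attach_map_val' s.val f

def Equiv.optionSumEquiv (α β : Type*) : Option α ⊕ β ≃ Option (α ⊕ β) where
  toFun := Sum.elim (Option.map Sum.inl) (some ∘ Sum.inr)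
  invFun o := o.elim (.inl none) (Sum.elim (.inl ∘ some) .inr)
  left_inv := by rintro ((_ | a) | b) <;> rfl
  right_inv := by rintro (_ | a | b) <;> rfl

def Equiv.sumOptionEquiv (α β : Type*) : β ⊕ Option α ≃ Option (β ⊕ α) :=
  (Equiv.sumComm _ _).trans ((Equiv.optionSumEquiv α β).trans (Equiv.sumComm α β).optionCongr)

namespace LGraph

variable {Lv Le : Type}

instance (G H : LGraph Lv Le) : Nonempty (PadV G H ≃ PadV H G) := ⟨Equiv.sumComm _ _⟩

theorem oaCost_eq_assignmentCost (G H : LGraph Lv Le) (c : PadV G H → PadV H G → ℝ) :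
    oaCost G H c = assignmentCost c := by
  simp only [oaCost, assignmentCost, iInf, Set.range, eq_comm]

noncomputable def labelMatches {G H : LGraph Lv Le} (f : PadV G H ≃ PadV H G) :
    Finset {x // x ∈ G.verts} :=
  Finset.univ.filter fun u => ∃ w, f (.inl u) = .inl w ∧ G.vl u = H.vl w

noncomputable def dummyMatches {G H : LGraph Lv Le} (f : PadV G H ≃ PadV H G) :
    Finset {x // x ∈ H.verts} :=
  Finset.univ.filter fun w => ∃ u, f (.inr w) = .inr u

theorem sum_cllb_eq {G H : LGraph Lv Le} (f : PadV G H ≃ PadV H G) :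
    ∑ x, cllb 1 1 G H x (f x)
      = (G.verts.card - (labelMatches f).card) + (H.verts.card - (dummyMatches f).card) := by
  have hl : ∀ u, cllb 1 1 G H (.inl u) (f (.inl u)) = 1 - if u ∈ labelMatches f then 1 else 0 :=
    fun u => by
      rcases hfu : f (.inl u) with w | w
      · simp only [labelMatches, cllb, hfu, Finset.mem_filter, Finset.mem_univ, true_and,
          Sum.inl.injEq, exists_eq_left']
        split_ifs <;> norm_num
      · simp [labelMatches, cllb, hfu]
  have hr : ∀ w, cllb 1 1 G H (.inr w) (f (.inr w)) = 1 - if w ∈ dummyMatches f then 1 else 0 :=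
    fun w => by rcases hfw : f (.inr w) with u | u <;> simp [dummyMatches, cllb, hfw]
  simp only [Fintype.sum_sum_type, hl, hr, Finset.sum_sub_distrib, Finset.sum_boole,
    Finset.filter_mem_eq_inter, Finset.univ_inter]
  simp

theorem card_labelMatches_le {G H : LGraph Lv Le} (f : PadV G H ≃ PadV H G) :
    (labelMatches f).card ≤ ((G.verts.val.map G.vl) ∩ (H.verts.val.map H.vl)).card := by
  choose p hp using fun u (hu : u ∈ labelMatches f) => (Finset.mem_filter.1 hu).2
  have hp_inj : Function.Injective fun u : {u // u ∈ labelMatches f} => p u.1 u.2 :=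
    fun u u' h => Subtype.ext (Sum.inl_injective (f.injective ((hp u.1 u.2).1.trans
      ((congrArg Sum.inl h).trans (hp u'.1 u'.2).1.symm))))
  have := Multiset.card_le_card_inter_map (fun u : {x // x ∈ G.verts} => G.vl u)
    (fun w : {x // x ∈ H.verts} => H.vl w) (Function.Embedding.subtype _) ⟨_, hp_inj⟩
    fun u => (hp u.1 u.2).2
  rwa [Fintype.card_coe, Finset.univ_val_map_coe, Finset.univ_val_map_coe] at this

theorem card_dummyMatches_le {G H : LGraph Lv Le} (f : PadV G H ≃ PadV H G) :
    (dummyMatches f).card ≤ G.verts.card := by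
  choose q hq using fun w (hw : w ∈ dummyMatches f) => (Finset.mem_filter.1 hw).2
  have := Fintype.card_le_of_injective (fun w : {w // w ∈ dummyMatches f} => q w.1 w.2)
    fun w w' h => Subtype.ext (Sum.inr_injective (f.injective ((hq w.1 w.2).trans
      ((congrArg Sum.inr h).trans (hq w'.1 w'.2).symm))))
  simpa using this

theorem max_sub_card_inter_le_llb (G H : LGraph Lv Le) :
    ((max G.verts.card H.verts.card : ℕ) : ℝ)
      - ((G.verts.val.map G.vl) ∩ (H.verts.val.map H.vl)).card ≤ LLB 1 1 G H := by
  obtain ⟨f, hf⟩ := exists_assignmentCost_eq (cllb 1 1 G H)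
  rw [LLB, oaCost_eq_assignmentCost, hf, sum_cllb_eq]
  have hD : (dummyMatches f).card ≤ H.verts.card :=
    (Finset.card_le_univ _).trans_eq (Fintype.card_coe _)
  have hmax : ((max G.verts.card H.verts.card : ℕ) : ℝ) + (dummyMatches f).card
      ≤ G.verts.card + H.verts.card := by
    exact_mod_cast (by have := card_dummyMatches_le f; omega :
      max G.verts.card H.verts.card + (dummyMatches f).card ≤ G.verts.card + H.verts.card)
  have hS : ((labelMatches f).card : ℝ) ≤ ((G.verts.val.map G.vl) ∩ (H.verts.val.map H.vl)).card :=
    by exact_mod_cast card_labelMatches_le f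
  linarith

theorem card_filter_mem_of_not_isDiag {s : Finset ℕ} {e : Sym2 ℕ} (hd : ¬ e.IsDiag)
    (he : ∀ v ∈ e, v ∈ s) : (s.filter (· ∈ e)).card = 2 := by
  rw [← Sym2.card_toFinset_of_not_isDiag e hd]
  congr 1
  ext v
  simpa using he v

theorem sum_degree_eq_two_mul_card_edges {G : LGraph Lv Le} (hG : G.WF) :
    ∑ v ∈ G.verts, G.degree v = 2 * G.edges.card := by
  have := Finset.sum_card_bipartiteAbove_eq_sum_card_bipartiteBelow
    (s := G.verts) (t := G.edges) (r := fun v e => v ∈ e)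
  simp only [Finset.bipartiteAbove, Finset.bipartiteBelow] at this
  simp only [degree, this]
  rw [Finset.sum_congr rfl fun e he => card_filter_mem_of_not_isDiag (hG.1 e he) (hG.2 e he),
    Finset.sum_const, smul_eq_mul, mul_comm]

theorem sum_padDeg {G : LGraph Lv Le} (hG : G.WF) (H : LGraph Lv Le) :
    ∑ x, (padDeg G H x : ℝ) = 2 * G.edges.card := by
  simp only [Fintype.sum_sum_type, padDeg, Nat.cast_zero, Finset.sum_const_zero, add_zero]
  rw [Finset.sum_coe_sort G.verts fun v => (G.degree v : ℝ)]
  exact_mod_cast sum_degree_eq_two_mul_card_edges hG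

theorem abs_sub_card_edges_le_dlb {G H : LGraph Lv Le} (hG : G.WF) (hH : H.WF) :
    |(G.edges.card : ℝ) - H.edges.card| ≤ DLB 1 G H := by
  obtain ⟨f, hf⟩ := exists_assignmentCost_eq (cdlb 1 G H)
  rw [DLB, oaCost_eq_assignmentCost, hf]
  calc |(G.edges.card : ℝ) - H.edges.card|
      = 1 / 2 * |∑ x, (padDeg G H x : ℝ) - ∑ x, (padDeg H G (f x) : ℝ)| := by
        rw [sum_padDeg hG, Equiv.sum_comp f fun y => (padDeg H G y : ℝ), sum_padDeg hH,
          ← mul_sub, abs_mul, abs_two]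
        ring
    _ ≤ 1 / 2 * ∑ x, |(padDeg G H x : ℝ) - padDeg H G (f x)| := by
        rw [← Finset.sum_sub_distrib]
        gcongr
        exact Finset.abs_sum_le_sum_abs _ _
    _ = ∑ x, cdlb 1 G H x (f x) := by
        simp only [cdlb, Finset.mul_sum]

theorem clb_le_branchLB (G H : LGraph Lv Le) : CLB 1 1 1 G H ≤ BranchLB G H := by
  simp only [CLB, LLB, DLB, BranchLB, oaCost_eq_assignmentCost]
  exact add_assignmentCost_le _ _

noncomputable def padAttr (G H : LGraph Lv Le) : PadV G H → Option (Lv × ℕ)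
  | .inl u => some (G.vl u, G.degree u)
  | .inr _ => none

/-- The branch ground cost `c_llb + c_dlb`, as a function of the vertex attributes. -/
noncomputable def attrDist (p q : Option (Lv × ℕ)) : ℝ :=
  (if p.map Prod.fst = q.map Prod.fst then 0 else 1)
    + 1 / 2 * |((p.elim 0 Prod.snd : ℕ) : ℝ) - (q.elim 0 Prod.snd : ℕ)|

@[simp]
theorem attrDist_some_some (l l' : Lv) (m n : ℕ) :
    attrDist (some (l, m)) (some (l', n)) = (if l = l' then 0 else 1) + 1 / 2 * |(m : ℝ) - n| := by
  simp [attrDist]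

@[simp]
theorem attrDist_self (p : Option (Lv × ℕ)) : attrDist p p = 0 := by
  simp [attrDist]

theorem attrDist_nonneg (p q : Option (Lv × ℕ)) : 0 ≤ attrDist p q := by
  unfold attrDist
  split_ifs <;> positivity

theorem attrDist_triangle (p q r : Option (Lv × ℕ)) :
    attrDist p r ≤ attrDist p q + attrDist q r := by
  unfold attrDist
  have := abs_sub_le ((p.elim 0 Prod.snd : ℕ) : ℝ) (q.elim 0 Prod.snd : ℕ) (r.elim 0 Prod.snd : ℕ)
  split_ifs <;> simp_all <;> linarith

theorem branchLB_eq_assignmentCost (G H : LGraph Lv Le) :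
    BranchLB G H = assignmentCost fun x y => attrDist (padAttr G H x) (padAttr H G y) := by
  rw [BranchLB, oaCost_eq_assignmentCost]
  congr
  funext x y
  rcases x with u | u <;> rcases y with v | v <;> simp [cllb, cdlb, padDeg, padAttr, attrDist]

theorem branchLB_self_nonpos (G : LGraph Lv Le) : BranchLB G G ≤ 0 := by
  rw [branchLB_eq_assignmentCost]
  exact (assignmentCost_le _ (Equiv.refl (PadV G G))).trans_eq (by simp)

theorem branchLB_le_sum_attrDist_add (G : LGraph Lv Le) (E : Finset (Sym2 ℕ)) (vl : ℕ → Lv)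
    (el : Sym2 ℕ → Le) (K : LGraph Lv Le) :
    BranchLB G K ≤ ∑ u : {x // x ∈ G.verts}, attrDist (some (G.vl u, G.degree u))
        (some (vl u, (⟨G.verts, E, vl, el⟩ : LGraph Lv Le).degree u))
      + BranchLB ⟨G.verts, E, vl, el⟩ K := by
  rw [branchLB_eq_assignmentCost, branchLB_eq_assignmentCost]
  refine (assignmentCost_le_sum_add attrDist_triangle _
    (padAttr (⟨G.verts, E, vl, el⟩ : LGraph Lv Le) K) _).trans_eq ?_
  congr 1
  · simp [Fintype.sum_sum_type, padAttr]
  · congr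
    funext x y
    rcases y with _ | _ <;> rfl

theorem sum_attrDist_eq_one_of_abs_sub (V : Finset ℕ) (vl : ℕ → Lv) (d₁ d₂ : ℕ → ℕ)
    {e : Sym2 ℕ} (hd : ¬ e.IsDiag) (heV : ∀ v ∈ e, v ∈ V)
    (h : ∀ v, |(d₁ v : ℝ) - d₂ v| = if v ∈ e then 1 else 0) :
    ∑ u : {x // x ∈ V}, attrDist (some (vl u, d₁ u)) (some (vl u, d₂ u)) = 1 := by
  simp only [attrDist_some_some, if_true, zero_add, h]
  rw [← Finset.mul_sum, Finset.sum_coe_sort V fun v => if v ∈ e then (1 : ℝ) else 0,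
    Finset.sum_boole, card_filter_mem_of_not_isDiag hd heV]
  norm_num

theorem sum_attrDist_update_le (V : Finset ℕ) (vl : ℕ → Lv) (d : ℕ → ℕ) {v : ℕ} (hv : v ∈ V)
    (l : Lv) :
    ∑ u : {x // x ∈ V}, attrDist (some (vl u, d u)) (some (Function.update vl v l u, d u)) ≤ 1 := by
  calc _ ≤ ∑ u : {x // x ∈ V}, if u = ⟨v, hv⟩ then (1 : ℝ) else 0 := by
        refine Finset.sum_le_sum fun u _ => ?_
        split_ifs with hu
        · simp only [attrDist_some_some, sub_self, abs_zero, mul_zero, add_zero]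
          split_ifs <;> norm_num
        · rw [Function.update_of_ne fun h => hu (Subtype.ext h), attrDist_self]
    _ = 1 := by simp

theorem abs_card_filter_insert_sub {E : Finset (Sym2 ℕ)} {e : Sym2 ℕ} (he : e ∉ E) (v : ℕ) :
    |(((insert e E).filter (v ∈ ·)).card : ℝ) - (E.filter (v ∈ ·)).card|
      = if v ∈ e then 1 else 0 := by
  rw [Finset.filter_insert]
  split_ifs with hv
  · rw [Finset.card_insert_of_notMem fun h => he (Finset.mem_filter.1 h).1]
    simp
  · simp

theorem branchLB_le_one_add_of_abs_sub_degree (G : LGraph Lv Le) (E : Finset (Sym2 ℕ))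
    (el : Sym2 ℕ → Le) {e : Sym2 ℕ} (hd : ¬ e.IsDiag) (heV : ∀ v ∈ e, v ∈ G.verts)
    (h : ∀ v, |(G.degree v : ℝ) - (E.filter (v ∈ ·)).card| = if v ∈ e then 1 else 0)
    (K : LGraph Lv Le) :
    BranchLB G K ≤ 1 + BranchLB ⟨G.verts, E, G.vl, el⟩ K :=
  (branchLB_le_sum_attrDist_add G E G.vl el K).trans_eq <|
    congrArg (· + _) (sum_attrDist_eq_one_of_abs_sub G.verts G.vl G.degree _ hd heV h)

theorem branchLB_le_one_add_insert_edge {G : LGraph Lv Le} {a b : ℕ} (ha : a ∈ G.verts)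
    (hb : b ∈ G.verts) (hab : a ≠ b) (hnotin : s(a, b) ∉ G.edges) (el : Sym2 ℕ → Le)
    (K : LGraph Lv Le) :
    BranchLB G K ≤ 1 + BranchLB ⟨G.verts, insert s(a, b) G.edges, G.vl, el⟩ K := by
  refine branchLB_le_one_add_of_abs_sub_degree G _ _ (e := s(a, b)) (by simpa using hab) ?_
    (fun v => by rw [abs_sub_comm]; exact abs_card_filter_insert_sub hnotin v) K
  intro v hv
  rcases Sym2.mem_iff.1 hv with rfl | rfl <;> assumption

theorem branchLB_le_one_add_erase_edge {G : LGraph Lv Le} (hG : G.WF) {e : Sym2 ℕ}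
    (he : e ∈ G.edges) (K : LGraph Lv Le) :
    BranchLB G K ≤ 1 + BranchLB ⟨G.verts, G.edges.erase e, G.vl, G.el⟩ K := by
  refine branchLB_le_one_add_of_abs_sub_degree G _ _ (hG.1 e he) (hG.2 e he) (fun v => ?_) K
  simpa [degree, Finset.insert_erase he] using
    abs_card_filter_insert_sub (Finset.notMem_erase e G.edges) v

structure IsIsolatedDeletion (G G₀ : LGraph Lv Le) (v : ℕ) : Prop where
  verts_eq : G.verts = insert v G₀.verts
  notMem : v ∉ G₀.verts
  edges_eq : G.edges = G₀.edges
  vl_eq : ∀ u ∈ G₀.verts, G.vl u = G₀.vl u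
  degree_eq_zero : G.degree v = 0

namespace IsIsolatedDeletion

variable {G G₀ : LGraph Lv Le} {v : ℕ}

theorem branchLB_eq (h : IsIsolatedDeletion G G₀ v) (K : LGraph Lv Le) :
    BranchLB G K = assignmentCost fun o p =>
      attrDist ((o : Option (PadV G₀ K)).elim (some (G.vl v, 0)) (padAttr G₀ K))
        ((p : Option (PadV K G₀)).elim none (padAttr K G₀)) := by
  let ι : {x // x ∈ G.verts} ≃ Option {x // x ∈ G₀.verts} :=
    (Equiv.subtypeEquivRight fun x => by rw [h.verts_eq]).trans
      (Finset.subtypeInsertEquivOption h.notMem)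
  let Φ : PadV G K ≃ Option (PadV G₀ K) :=
    (ι.sumCongr (Equiv.refl _)).trans (Equiv.optionSumEquiv _ _)
  let Ψ : PadV K G ≃ Option (PadV K G₀) :=
    ((Equiv.refl _).sumCongr ι).trans (Equiv.sumOptionEquiv _ _)
  rw [branchLB_eq_assignmentCost, ← assignmentCost_comp_equiv Φ.symm Ψ.symm]
  congr
  funext o p
  congr 1
  · rcases o with _ | u | w
    · change some (G.vl v, G.degree v) = some (G.vl v, 0)
      rw [h.degree_eq_zero]
    · change some (G.vl u, (G.edges.filter (u.1 ∈ ·)).card) = some (G₀.vl u, G₀.degree u)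
      rw [h.vl_eq u u.2, h.edges_eq]
      rfl
    · rfl
  · rcases p with _ | w | u <;> rfl

theorem branchLB_le (h : IsIsolatedDeletion G G₀ v) (K : LGraph Lv Le) :
    BranchLB G K ≤ 1 + BranchLB G₀ K := by
  rw [h.branchLB_eq, branchLB_eq_assignmentCost]
  refine (assignmentCost_le_add_some _).trans_eq ?_
  congr 1
  simp [attrDist]

theorem branchLB_deletion_le (h : IsIsolatedDeletion G G₀ v) (K : LGraph Lv Le) :
    BranchLB G₀ K ≤ 1 + BranchLB G K := by
  have : Nonempty (Option (PadV G₀ K) ≃ Option (PadV K G₀)) :=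
    ⟨(Equiv.sumComm _ _).optionCongr⟩
  rw [h.branchLB_eq, branchLB_eq_assignmentCost]
  refine (assignmentCost_some_le attrDist_triangle attrDist_nonneg
    (fun o : Option (PadV G₀ K) => o.elim (some (G.vl v, 0)) (padAttr G₀ K))
    (fun p : Option (PadV K G₀) => p.elim none (padAttr K G₀))).trans_eq ?_
  congr 1
  simp [attrDist]

end IsIsolatedDeletion

theorem isIsolatedDeletion_addV {G : LGraph Lv Le} (hG : G.WF) {v : ℕ} (hv : v ∉ G.verts)
    (l : Lv) : IsIsolatedDeletion ⟨insert v G.verts, G.edges, Function.update G.vl v l, G.el⟩ G v :=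
  ⟨rfl, hv, rfl, fun _ hu => Function.update_of_ne (ne_of_mem_of_not_mem hu hv) _ _,
    Finset.card_eq_zero.2 (Finset.filter_eq_empty_iff.2 fun e he hve => hv (hG.2 e he _ hve))⟩

theorem isIsolatedDeletion_delV {G : LGraph Lv Le} {v : ℕ} (hv : v ∈ G.verts)
    (hiso : ∀ e ∈ G.edges, v ∉ e) : IsIsolatedDeletion G ⟨G.verts.erase v, G.edges, G.vl, G.el⟩ v :=
  ⟨(Finset.insert_erase hv).symm, Finset.notMem_erase v _, rfl, fun _ _ => rfl,
    Finset.card_eq_zero.2 (Finset.filter_eq_empty_iff.2 hiso)⟩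

theorem wf_of_apply_eq_some {G G₁ : LGraph Lv Le} (hG : G.WF) {o : Op Lv Le}
    (h : apply o G = some G₁) : G₁.WF := by
  obtain ⟨hd, hv⟩ := hG
  cases o <;> simp only [apply] at h <;> split_ifs at h with hc <;> cases h
  all_goals refine ⟨fun e he => ?_, fun e he w hw => ?_⟩
  all_goals simp only [Finset.mem_insert, Finset.mem_erase] at he ⊢
  all_goals aesop (add simp [Sym2.mem_iff])

theorem wf_of_applyList_eq_some {ops : List (Op Lv Le)} {G K : LGraph Lv Le} (hG : G.WF)
    (h : applyList ops G = some K) : K.WF := by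
  induction ops generalizing G with
  | nil => exact Option.some.inj h ▸ hG
  | cons o ops ih =>
    obtain ⟨G₁, h₁, h₂⟩ := Option.bind_eq_some_iff.1 h
    exact ih (wf_of_apply_eq_some hG h₁) h₂

theorem branchLB_le_opCost_add {G G₁ : LGraph Lv Le} (hG : G.WF) {o : Op Lv Le}
    (h : apply o G = some G₁) (K : LGraph Lv Le) :
    BranchLB G K ≤ opCost 1 1 1 1 o + BranchLB G₁ K := by
  cases o with
  | addV v l =>
    simp only [apply] at h
    split_ifs at h with hv
    cases h
    exact (isIsolatedDeletion_addV hG hv l).branchLB_deletion_le K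
  | delV v =>
    simp only [apply] at h
    split_ifs at h with hv
    cases h
    exact (isIsolatedDeletion_delV hv.1 hv.2).branchLB_le K
  | relV v l =>
    simp only [apply] at h
    split_ifs at h with hv
    cases h
    exact (branchLB_le_sum_attrDist_add G G.edges (Function.update G.vl v l) G.el K).trans
      (add_le_add (sum_attrDist_update_le G.verts G.vl G.degree hv l) le_rfl)
  | addE a b l =>
    simp only [apply] at h
    split_ifs at h with hab
    cases h
    exact branchLB_le_one_add_insert_edge hab.1 hab.2.1 hab.2.2.1 hab.2.2.2 _ K
  | delE e =>
    simp only [apply] at h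
    split_ifs at h with he
    cases h
    exact branchLB_le_one_add_erase_edge hG he K
  | relE e l =>
    simp only [apply] at h
    split_ifs at h with he
    cases h
    refine (branchLB_le_sum_attrDist_add G G.edges G.vl (Function.update G.el e l) K).trans
      (add_le_add ?_ le_rfl)
    simp [degree, opCost]

theorem branchLB_le_sum_opCost {ops : List (Op Lv Le)} {G K : LGraph Lv Le} (hG : G.WF)
    (h : applyList ops G = some K) : BranchLB G K ≤ (ops.map (opCost 1 1 1 1)).sum := by
  induction ops generalizing G with
  | nil => exact Option.some.inj h ▸ branchLB_self_nonpos G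
  | cons o ops ih =>
    obtain ⟨G₁, h₁, h₂⟩ := Option.bind_eq_some_iff.1 h
    rw [List.map_cons, List.sum_cons]
    exact (branchLB_le_opCost_add hG h₁ K).trans
      (add_le_add le_rfl (ih (wf_of_apply_eq_some hG h₁) h₂))

theorem degree_map_of_iso {H' H : LGraph Lv Le} (hH' : H'.WF) (hH : H.WF) {φ : ℕ → ℕ}
    (hφ : Set.BijOn φ H'.verts H.verts)
    (hadj : ∀ u ∈ H'.verts, ∀ v ∈ H'.verts, s(u, v) ∈ H'.edges ↔ s(φ u, φ v) ∈ H.edges)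
    {u : ℕ} (hu : u ∈ H'.verts) : H.degree (φ u) = H'.degree u := by
  refine (Finset.card_bij (fun e _ => e.map φ) ?_ ?_ ?_).symm
  · intro e he
    rw [Finset.mem_filter] at he ⊢
    obtain ⟨w, rfl⟩ := Sym2.mem_iff_exists.1 he.2
    exact ⟨(hadj u hu w (hH'.2 _ he.1 w (Sym2.mem_mk_right u w))).1 he.1, Sym2.mem_mk_left _ _⟩
  · intro e₁ h₁ e₂ h₂ heq
    rw [Finset.mem_filter] at h₁ h₂
    obtain ⟨w₁, rfl⟩ := Sym2.mem_iff_exists.1 h₁.2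
    obtain ⟨w₂, rfl⟩ := Sym2.mem_iff_exists.1 h₂.2
    have hw₁ := hH'.2 _ h₁.1 w₁ (Sym2.mem_mk_right u w₁)
    have hw₂ := hH'.2 _ h₂.1 w₂ (Sym2.mem_mk_right u w₂)
    rcases Sym2.eq_iff.1 heq with ⟨-, h⟩ | ⟨h, h'⟩
    · rw [hφ.injOn hw₁ hw₂ h]
    · rw [hφ.injOn hw₂ hu h.symm, hφ.injOn hw₁ hu h']
  · intro e he
    rw [Finset.mem_filter] at he
    obtain ⟨w', rfl⟩ := Sym2.mem_iff_exists.1 he.2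
    obtain ⟨w, hw, rfl⟩ := hφ.surjOn (hH.2 _ he.1 w' (Sym2.mem_mk_right _ w'))
    exact ⟨s(u, w), Finset.mem_filter.2 ⟨(hadj u hu w hw).2 he.1, Sym2.mem_mk_left _ _⟩, rfl⟩

theorem branchLB_eq_of_iso (G : LGraph Lv Le) {H' H : LGraph Lv Le} (hH' : H'.WF) (hH : H.WF)
    (hiso : Iso H' H) : BranchLB G H = BranchLB G H' := by
  obtain ⟨φ, hφ, hvl, hadj, -⟩ := hiso
  let ψ : {x // x ∈ H'.verts} ≃ {x // x ∈ H.verts} := hφ.equiv φ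
  rw [branchLB_eq_assignmentCost, branchLB_eq_assignmentCost,
    ← assignmentCost_comp_equiv ((Equiv.refl _).sumCongr ψ) (ψ.sumCongr (Equiv.refl _))]
  congr
  funext x y
  congr 1
  · rcases x with _ | _ <;> rfl
  · rcases y with u | _
    · change some (H.vl (φ u), H.degree (φ u)) = some (H'.vl u, H'.degree u)
      rw [hvl u u.2, degree_map_of_iso hH' hH hφ hadj u.2]
    · rfl

def EditStep (G G' : LGraph Lv Le) : Prop := ∃ o : Op Lv Le, apply o G = some G'

open Relation

theorem exists_applyList_of_reflTransGen {G G' : LGraph Lv Le}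
    (h : ReflTransGen EditStep G G') : ∃ ops, applyList ops G = some G' := by
  induction h using ReflTransGen.head_induction_on with
  | refl => exact ⟨[], rfl⟩
  | head hstep _ ih =>
    obtain ⟨o, ho⟩ := hstep
    obtain ⟨ops, hops⟩ := ih
    exact ⟨o :: ops, by simp [applyList, ho, hops]⟩

theorem reflTransGen_clear_edges (V : Finset ℕ) (E : Finset (Sym2 ℕ)) (vl : ℕ → Lv)
    (el : Sym2 ℕ → Le) : ReflTransGen EditStep ⟨V, E, vl, el⟩ ⟨V, ∅, vl, el⟩ := by
  induction E using Finset.induction_on with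
  | empty => rfl
  | insert e E he ih => exact .head ⟨.delE e, by simp [apply, Finset.erase_insert he]⟩ ih

theorem reflTransGen_clear_verts (V : Finset ℕ) (vl : ℕ → Lv) (el : Sym2 ℕ → Le) :
    ReflTransGen EditStep (⟨V, ∅, vl, el⟩ : LGraph Lv Le) ⟨∅, ∅, vl, el⟩ := by
  induction V using Finset.induction_on with
  | empty => rfl
  | insert v V hv ih => exact .head ⟨.delV v, by simp [apply, Finset.erase_insert hv]⟩ ih

theorem exists_reflTransGen_add_verts (vl target : ℕ → Lv) (el : Sym2 ℕ → Le) (V : Finset ℕ) :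
    ∃ vl', ReflTransGen EditStep ⟨∅, ∅, vl, el⟩ ⟨V, ∅, vl', el⟩ ∧ Set.EqOn vl' target V := by
  induction V using Finset.induction_on with
  | empty => exact ⟨vl, .refl, by simp⟩
  | insert v V hv ih =>
    obtain ⟨vl', hpath, hvl'⟩ := ih
    refine ⟨Function.update vl' v (target v), hpath.tail ⟨.addV v (target v), by simp [apply, hv]⟩,
      fun u hu => ?_⟩
    rcases eq_or_ne u v with rfl | huv
    · simp
    · rw [Function.update_of_ne huv]
      exact hvl' (Finset.mem_of_mem_insert_of_ne hu huv)

theorem exists_reflTransGen_add_edges (V : Finset ℕ) (vl : ℕ → Lv) (el target : Sym2 ℕ → Le)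
    (E : Finset (Sym2 ℕ)) (hE : ∀ e ∈ E, ¬ e.IsDiag ∧ ∀ v ∈ e, v ∈ V) :
    ∃ el', ReflTransGen EditStep ⟨V, ∅, vl, el⟩ ⟨V, E, vl, el'⟩ ∧ Set.EqOn el' target E := by
  induction E using Finset.induction_on with
  | empty => exact ⟨el, .refl, by simp⟩
  | insert e E he ih =>
    obtain ⟨el', hpath, hel'⟩ := ih fun e' he' => hE e' (Finset.mem_insert_of_mem he')
    induction e using Sym2.ind with
    | _ a b =>
      obtain ⟨hd, hV⟩ := hE s(a, b) (Finset.mem_insert_self _ _)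
      refine ⟨Function.update el' s(a, b) (target s(a, b)),
        hpath.tail ⟨.addE a b (target s(a, b)), ?_⟩, fun e' he' => ?_⟩
      · simp [apply, hV a (Sym2.mem_mk_left a b), hV b (Sym2.mem_mk_right a b),
          Sym2.mk_isDiag_iff.not.1 hd, he]
      · rcases eq_or_ne e' s(a, b) with rfl | hne
        · simp
        · rw [Function.update_of_ne hne]
          exact hel' (Finset.mem_of_mem_insert_of_ne he' hne)

theorem exists_editPath (G : LGraph Lv Le) {H : LGraph Lv Le} (hH : H.WF) :
    ∃ (ops : List (Op Lv Le)) (H' : LGraph Lv Le), applyList ops G = some H' ∧ Iso H' H := by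
  obtain ⟨vl, hvl, hvl_eq⟩ := exists_reflTransGen_add_verts G.vl H.vl G.el H.verts
  obtain ⟨el, hel, hel_eq⟩ := exists_reflTransGen_add_edges H.verts vl G.el H.el H.edges
    fun e he => ⟨hH.1 e he, hH.2 e he⟩
  obtain ⟨ops, hops⟩ := exists_applyList_of_reflTransGen <|
    (reflTransGen_clear_edges G.verts G.edges G.vl G.el).trans <|
      (reflTransGen_clear_verts G.verts G.vl G.el).trans (hvl.trans hel)
  exact ⟨ops, _, hops, id, Set.bijOn_id _, fun v hv => (hvl_eq hv).symm,
    fun _ _ _ _ => Iff.rfl, fun _ _ _ _ he => (hel_eq he).symm⟩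

theorem branchLB_le_ged {G H : LGraph Lv Le} (hG : G.WF) (hH : H.WF) :
    BranchLB G H ≤ GED 1 1 1 1 G H := by
  obtain ⟨ops, H', hops, hiso⟩ := exists_editPath G hH
  refine le_csInf ⟨_, ops, H', hops, hiso, rfl⟩ ?_
  rintro r ⟨ops, H', hops, hiso, rfl⟩
  rw [branchLB_eq_of_iso G (wf_of_applyList_eq_some hG hops) hH hiso]
  exact branchLB_le_sum_opCost hG hops

/-- For any two vertex-labeled graphs `G` and `H` with uniform unit edit
costs, `SLF(G,H) ≤ CLB(G,H) ≤ BranchLB(G,H) ≤ GED(G,H)`. -/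
theorem slf_le_clb_le_branch_le_ged {Lv Le : Type}
    (G H : LGraph Lv Le) (hG : G.WF) (hH : H.WF) :
    SLF G H ≤ CLB 1 1 1 G H ∧ CLB 1 1 1 G H ≤ BranchLB G H ∧
      BranchLB G H ≤ GED 1 1 1 1 G H :=
  ⟨add_le_add (max_sub_card_inter_le_llb G H) (abs_sub_card_edges_le_dlb hG hH),
    clb_le_branchLB G H, branchLB_le_ged hG hH⟩

end LGraph
end

section
/- Single-linkage hierarchical clustering of a finite set L with dissimilarity c produces the subdominant ultrametric d*: d* is an ultrametric with d* ≤ c pointwise, and for every ultrametric d with d ≤ c pointwise, d ≤ d* pointwise. Equivalently, d*(x,y) = min over paths x = z₀, z₁, …, z_k = y in L of max_i c(z_{i−1}, z_i). -/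
/-!
Along a path `x = z₀, …, z_k = y`, the strong triangle inequality gives
`d x y ≤ max_i d(z_{i-1}, z_i) ≤ max_i c(z_{i-1}, z_i)` for every ultrametric `d ≤ c`, so `d` is
below the minimax path cost `slDist c`. Conversely `slDist c` is itself an ultrametric below `c`:
the one-step path bounds it by `c`, reversing paths makes it symmetric, and concatenating a path
`x → z` with one `z → y` costs the maximum of the two costs. The infimum over paths need not be
attained, so the strong triangle inequality is passed to infima by
`le_max_csInf_of_forall_le_max`. Hence `slDist c` is the greatest ultrametric below `c`.
-/

open scoped Classical

/-- `d` is an ultrametric: non-negative, zero on the diagonal, symmetric, and satisfying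
the strong triangle inequality `d(x,y) ≤ max (d(x,z)) (d(y,z))`. -/
def IsUltra {L : Type} (d : L → L → ℝ) : Prop :=
  (∀ x y, 0 ≤ d x y) ∧ (∀ x, d x x = 0) ∧ (∀ x y, d x y = d y x) ∧
    ∀ x y z, d x y ≤ max (d x z) (d y z)

/-- The subdominant ultrametric to `c`: the pointwise supremum of all ultrametrics bounded
above by `c`. -/
noncomputable def subdom {L : Type} (c : L → L → ℝ) (x y : L) : ℝ :=
  sSup {r : ℝ | ∃ d : L → L → ℝ, IsUltra d ∧ (∀ a b, d a b ≤ c a b) ∧ r = d x y}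

/-- The single-linkage (minimax path) distance: the minimum over all paths
`x = z₀, z₁, …, z_k = y` in `L` of the maximal cost `c(z_{i−1}, z_i)` of a step. -/
noncomputable def slDist {L : Type} (c : L → L → ℝ) (x y : L) : ℝ :=
  sInf {r : ℝ | ∃ p : List L, p.head? = some x ∧ p.getLast? = some y ∧
    r = ((p.zip p.tail).map fun q => c q.1 q.2).foldr max 0}

theorem le_max_csInf_of_forall_le_max {α : Type*} [ConditionallyCompleteLinearOrder α]
    {A B : Set α} {a : α} (hA : A.Nonempty) (hB : B.Nonempty)
    (h : ∀ s ∈ A, ∀ t ∈ B, a ≤ max s t) : a ≤ max (sInf A) (sInf B) := by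
  by_contra! hlt
  obtain ⟨s, hs, hsa⟩ := exists_lt_of_csInf_lt hA ((le_max_left _ _).trans_lt hlt)
  obtain ⟨t, ht, hta⟩ := exists_lt_of_csInf_lt hB ((le_max_right _ _).trans_lt hlt)
  exact (h s hs t ht).not_gt (max_lt hsa hta)

namespace SingleLinkage

variable {L : Type} (c : L → L → ℝ)

def pathCost (p : List L) : ℝ := ((p.zip p.tail).map fun q => c q.1 q.2).foldr max 0

@[simp] lemma pathCost_singleton (a : L) : pathCost c [a] = 0 := rfl

@[simp] lemma pathCost_cons_cons (a b : L) (l : List L) :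
    pathCost c (a :: b :: l) = max (c a b) (pathCost c (b :: l)) := rfl

lemma pathCost_nonneg : ∀ p : List L, 0 ≤ pathCost c p
  | [] | [_] => le_rfl
  | _ :: b :: l => le_max_of_le_right (pathCost_nonneg (b :: l))

lemma pathCost_append_cons : ∀ (p : List L) (a : L) (q : List L),
    pathCost c (p ++ a :: q) = max (pathCost c (p ++ [a])) (pathCost c (a :: q))
  | [], a, q => by simp [max_eq_right (pathCost_nonneg c (a :: q))]
  | [b], a, q => by
      simp [max_assoc, max_eq_right (pathCost_nonneg c (a :: q))]
  | b :: b' :: p, a, q => by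
      simp only [List.cons_append, pathCost_cons_cons]
      rw [← List.cons_append, pathCost_append_cons (b' :: p) a q, max_assoc, List.cons_append]

lemma pathCost_reverse (hsymm : ∀ x y, c x y = c y x) :
    ∀ p : List L, pathCost c p.reverse = pathCost c p
  | [] | [_] => rfl
  | a :: b :: l => by
      have hrev : (a :: b :: l).reverse = l.reverse ++ b :: [a] := by simp
      rw [hrev, pathCost_append_cons, ← List.reverse_cons, pathCost_reverse hsymm (b :: l)]
      simp only [pathCost_cons_cons, pathCost_singleton]
      rw [hsymm b a, ← max_assoc, max_eq_left (le_max_of_le_left (pathCost_nonneg c _)),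
        max_comm]

def pathCosts (x y : L) : Set ℝ :=
  {r | ∃ p : List L, p.head? = some x ∧ p.getLast? = some y ∧ r = pathCost c p}

lemma slDist_eq_sInf_pathCosts (x y : L) : slDist c x y = sInf (pathCosts c x y) := rfl

lemma pathCosts_nonempty (x y : L) : (pathCosts c x y).Nonempty :=
  ⟨_, [x, y], rfl, rfl, rfl⟩

lemma bddBelow_pathCosts (x y : L) : BddBelow (pathCosts c x y) := by
  refine ⟨0, ?_⟩
  rintro _ ⟨p, -, -, rfl⟩
  exact pathCost_nonneg c p

lemma slDist_le_pathCost {x y : L} {p : List L} (hx : p.head? = some x)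
    (hy : p.getLast? = some y) : slDist c x y ≤ pathCost c p :=
  csInf_le (bddBelow_pathCosts c x y) ⟨p, hx, hy, rfl⟩

lemma le_slDist {x y : L} {a : ℝ}
    (h : ∀ p : List L, p.head? = some x → p.getLast? = some y → a ≤ pathCost c p) :
    a ≤ slDist c x y :=
  le_csInf (pathCosts_nonempty c x y) (by rintro _ ⟨p, hx, hy, rfl⟩; exact h p hx hy)

lemma slDist_nonneg (x y : L) : 0 ≤ slDist c x y :=
  le_slDist c fun p _ _ => pathCost_nonneg c p

lemma slDist_self (x : L) : slDist c x x = 0 :=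
  (slDist_le_pathCost c (p := [x]) rfl rfl).antisymm (slDist_nonneg c x x)

lemma slDist_le (hnn : ∀ x y, 0 ≤ c x y) (x y : L) : slDist c x y ≤ c x y :=
  (slDist_le_pathCost c (p := [x, y]) rfl rfl).trans_eq (max_eq_left (hnn x y))

lemma slDist_comm (hsymm : ∀ x y, c x y = c y x) (x y : L) : slDist c x y = slDist c y x := by
  have key (x y : L) : slDist c x y ≤ slDist c y x := le_slDist c fun p hy hx => by
    rw [← pathCost_reverse c hsymm]
    exact slDist_le_pathCost c (by simpa using hx) (by simpa using hy)
  exact (key x y).antisymm (key y x)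

lemma exists_path_pathCost_eq_max {x y z : L} {p q : List L}
    (hpx : p.head? = some x) (hpz : p.getLast? = some z)
    (hqz : q.head? = some z) (hqy : q.getLast? = some y) :
    ∃ r : List L, r.head? = some x ∧ r.getLast? = some y ∧
      pathCost c r = max (pathCost c p) (pathCost c q) := by
  obtain ⟨p₀, rfl⟩ := List.getLast?_eq_some_iff.1 hpz
  obtain ⟨t, rfl⟩ := List.head?_eq_some_iff.1 hqz
  refine ⟨p₀ ++ z :: t, ?_, ?_, pathCost_append_cons c p₀ z t⟩
  · simpa [List.head?_append] using hpx
  · simpa using hqy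

lemma slDist_le_max (hsymm : ∀ x y, c x y = c y x) (x y z : L) :
    slDist c x y ≤ max (slDist c x z) (slDist c y z) := by
  rw [slDist_eq_sInf_pathCosts c x z, slDist_eq_sInf_pathCosts c y z]
  refine le_max_csInf_of_forall_le_max (pathCosts_nonempty c x z) (pathCosts_nonempty c y z) ?_
  rintro _ ⟨p, hpx, hpz, rfl⟩ _ ⟨q, hqy, hqz, rfl⟩
  obtain ⟨r, hrx, hry, hr⟩ :=
    exists_path_pathCost_eq_max c hpx hpz (q := q.reverse) (by simpa using hqz) (by simpa using hqy)
  rw [← pathCost_reverse c hsymm q, ← hr]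
  exact slDist_le_pathCost c hrx hry

theorem isUltra_slDist (hsymm : ∀ x y, c x y = c y x) : IsUltra (slDist c) :=
  ⟨slDist_nonneg c, slDist_self c, slDist_comm c hsymm, slDist_le_max c hsymm⟩

lemma _root_.IsUltra.le_pathCost {d : L → L → ℝ} (hd : IsUltra d) (hdc : ∀ a b, d a b ≤ c a b) :
    ∀ (p : List L) {x y : L}, p.head? = some x → p.getLast? = some y → d x y ≤ pathCost c p
  | [], _, _, hx, _ => by simp at hx
  | [a], x, y, hx, hy => by
      obtain rfl : a = x := by simpa using hx
      obtain rfl : a = y := by simpa using hy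
      simp [hd.2.1]
  | a :: b :: l, x, y, hx, hy => by
      obtain rfl : a = x := by simpa using hx
      have hby : d y b ≤ pathCost c (b :: l) := by
        rw [hd.2.2.1]
        exact IsUltra.le_pathCost hd hdc (b :: l) rfl (by simpa using hy)
      exact (hd.2.2.2 a y b).trans (max_le_max (hdc a b) hby)

theorem _root_.IsUltra.le_slDist {d : L → L → ℝ} (hd : IsUltra d) (hdc : ∀ a b, d a b ≤ c a b)
    (x y : L) : d x y ≤ slDist c x y :=
  SingleLinkage.le_slDist c fun p hx hy => hd.le_pathCost c hdc p hx hy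

end SingleLinkage

theorem single_linkage_subdominant_general {L : Type}
    (c : L → L → ℝ) (hsymm : ∀ x y, c x y = c y x) (hnn : ∀ x y, 0 ≤ c x y) :
    IsUltra (slDist c) ∧ (∀ x y, slDist c x y ≤ c x y) ∧
      (∀ d : L → L → ℝ, IsUltra d → (∀ a b, d a b ≤ c a b) →
        ∀ x y, d x y ≤ slDist c x y) ∧
      (∀ x y, slDist c x y = subdom c x y) := by
  have hultra := SingleLinkage.isUltra_slDist c hsymm
  have hle := SingleLinkage.slDist_le c hnn
  refine ⟨hultra, hle, fun d hd hdc => hd.le_slDist c hdc, fun x y => ?_⟩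
  have hgreatest : IsGreatest
      {r : ℝ | ∃ d : L → L → ℝ, IsUltra d ∧ (∀ a b, d a b ≤ c a b) ∧ r = d x y}
      (slDist c x y) :=
    ⟨⟨slDist c, hultra, hle, rfl⟩, by rintro _ ⟨d, hd, hdc, rfl⟩; exact hd.le_slDist c hdc x y⟩
  exact hgreatest.csSup_eq.symm

/-- Single-linkage hierarchical clustering of a finite set `L` with
dissimilarity `c` produces the subdominant ultrametric: the minimax path distance `slDist c`
is an ultrametric, is bounded above by `c`, dominates every ultrametric bounded above by
`c`, and coincides with the subdominant ultrametric `d*`. -/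
theorem single_linkage_subdominant {L : Type} [Fintype L]
    (c : L → L → ℝ) (hsymm : ∀ x y, c x y = c y x) (hnn : ∀ x y, 0 ≤ c x y)
    (hzero : ∀ x, c x x = 0) :
    IsUltra (slDist c) ∧ (∀ x y, slDist c x y ≤ c x y) ∧
      (∀ d : L → L → ℝ, IsUltra d → (∀ a b, d a b ≤ c a b) →
        ∀ x y, d x y ≤ slDist c x y) ∧
      (∀ x y, slDist c x y = subdom c x y) :=
  single_linkage_subdominant_general c hsymm hnn
end

section
/- For any two graphs G and H and non-negative edit costs, DLB(G,H) = (c_e/2) · ‖φ(G) − φ(H)‖₁ where φ(G) ∈ ℝ^Δ is the vector whose k-th entry (1 ≤ k ≤ Δ) is the number of vertices of G with degree ≥ k. -/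
open scoped Classical

/-!
Write `|a - b|` for `a, b ≤ M` as the number of thresholds `k ∈ [1, M]` separating `a` from `b`.
Summed over the pairs of a matching of the padded vertex sets, the triangle inequality at each
threshold `k` bounds the cost below by `|#{deg ≥ k in G} - #{deg ≥ k in H}|` summed over `k`.
Matching the vertices in increasing order of degree attains this bound: in sorted order the
vertices of degree `≥ k` form a final segment on both sides, so at each threshold all mismatches
have the same sign and the triangle inequality is an equality.
-/

open Finset

noncomputable def layer (k a : ℕ) : ℝ := if k ≤ a then 1 else 0

lemma layer_lt_layer_iff {k a b : ℕ} : layer k a < layer k b ↔ a < k ∧ k ≤ b := by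
  unfold layer; split_ifs <;> grind

lemma sum_layer_Icc {a M : ℕ} (ha : a ≤ M) : ∑ k ∈ Icc 1 M, layer k a = a := by
  have : (Icc 1 M).filter (· ≤ a) = Icc 1 a := by
    ext k; simp only [mem_filter, mem_Icc]; omega
  simp only [layer, sum_boole, this, Nat.card_Icc, add_tsub_cancel_right]

lemma abs_layer_sub_layer (k a b : ℕ) :
    |layer k a - layer k b| = layer k (max a b) - layer k (min a b) := by
  unfold layer; split_ifs <;> grind

lemma abs_sub_eq_sum_abs_layer_sub {a b M : ℕ} (ha : a ≤ M) (hb : b ≤ M) :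
    |(a : ℝ) - b| = ∑ k ∈ Icc 1 M, |layer k a - layer k b| := by
  simp only [abs_layer_sub_layer, sum_sub_distrib, sum_layer_Icc (max_le ha hb),
    sum_layer_Icc ((min_le_left a b).trans ha), Nat.cast_max, Nat.cast_min, max_sub_min_eq_abs']

lemma sum_layer_eq_card {α : Type*} [Fintype α] (d : α → ℕ) (k : ℕ) :
    ∑ x, layer k (d x) = #{x | k ≤ d x} := by
  simp only [layer, sum_boole]

section Monotone

variable {ι : Type*} [Fintype ι] [LinearOrder ι] {a b : ι → ℕ}

lemma layer_comp_le_or_ge_of_monotone (ha : Monotone a) (hb : Monotone b) (k : ℕ) :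
    (∀ i, layer k (a i) ≤ layer k (b i)) ∨ ∀ i, layer k (b i) ≤ layer k (a i) := by
  by_contra! ⟨⟨i, hi⟩, j, hj⟩
  rw [layer_lt_layer_iff] at hi hj
  rcases le_total i j with hij | hij
  · exact absurd (hi.2.trans (ha hij)) hj.1.not_ge
  · exact absurd (hj.2.trans (hb hij)) hi.1.not_ge

lemma sum_abs_layer_sub_of_monotone (ha : Monotone a) (hb : Monotone b) (k : ℕ) :
    ∑ i, |layer k (a i) - layer k (b i)| = |∑ i, (layer k (a i) - layer k (b i))| := by
  rcases layer_comp_le_or_ge_of_monotone ha hb k with h | h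
  · rw [← abs_neg, ← sum_neg_distrib,
      abs_sum_of_nonneg' fun i => neg_nonneg.2 (sub_nonpos.2 (h i))]
    exact sum_congr rfl fun i _ => abs_of_nonpos (sub_nonpos.2 (h i))
  · rw [abs_sum_of_nonneg' fun i => sub_nonneg.2 (h i)]
    exact sum_congr rfl fun i _ => abs_of_nonneg (sub_nonneg.2 (h i))

end Monotone

lemma exists_equiv_fin_monotone {α : Type*} [Fintype α] (d : α → ℕ) :
    ∃ e : Fin (Fintype.card α) ≃ α, Monotone (d ∘ e) := by
  let e₀ := (Fintype.equivFin α).symm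
  exact ⟨(Tuple.sort (d ∘ e₀)).trans e₀, Tuple.monotone_sort (d ∘ e₀)⟩

section Transport

variable {α β : Type*} [Fintype α] {d : α → ℕ} {d' : β → ℕ} {M : ℕ}

lemma sum_abs_sub_comp_equiv_eq_sum_layer (hd : ∀ x, d x ≤ M) (hd' : ∀ y, d' y ≤ M)
    (f : α ≃ β) :
    ∑ x, |(d x : ℝ) - d' (f x)| =
      ∑ k ∈ Icc 1 M, ∑ x, |layer k (d x) - layer k (d' (f x))| := by
  rw [sum_comm]
  exact sum_congr rfl fun x _ => abs_sub_eq_sum_abs_layer_sub (hd x) (hd' (f x))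

variable [Fintype β]

lemma card_sub_card_eq_sum_layer_sub (f : α ≃ β) (k : ℕ) :
    (#{x | k ≤ d x} : ℝ) - #{y | k ≤ d' y} =
      ∑ x, (layer k (d x) - layer k (d' (f x))) := by
  rw [sum_sub_distrib, f.sum_comp (fun y => layer k (d' y)), sum_layer_eq_card,
    sum_layer_eq_card]

lemma sum_abs_card_sub_card_le (hd : ∀ x, d x ≤ M) (hd' : ∀ y, d' y ≤ M) (f : α ≃ β) :
    ∑ k ∈ Icc 1 M, |(#{x | k ≤ d x} : ℝ) - #{y | k ≤ d' y}| ≤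
      ∑ x, |(d x : ℝ) - d' (f x)| := by
  rw [sum_abs_sub_comp_equiv_eq_sum_layer hd hd' f]
  gcongr with k
  rw [card_sub_card_eq_sum_layer_sub f]
  exact abs_sum_le_sum_abs _ _

/-- The witness matches both sides in increasing order of `d` and `d'`. -/
lemma exists_sum_abs_sub_comp_equiv_eq (hd : ∀ x, d x ≤ M) (hd' : ∀ y, d' y ≤ M)
    (hcard : Fintype.card α = Fintype.card β) :
    ∃ f : α ≃ β, ∑ x, |(d x : ℝ) - d' (f x)| =
      ∑ k ∈ Icc 1 M, |(#{x | k ≤ d x} : ℝ) - #{y | k ≤ d' y}| := by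
  obtain ⟨e₁, he₁⟩ := exists_equiv_fin_monotone d
  obtain ⟨e₂, he₂⟩ := exists_equiv_fin_monotone d'
  let f : α ≃ β := e₁.symm.trans ((finCongr hcard).trans e₂)
  have hf : Monotone (d' ∘ f ∘ e₁) := by
    intro i j hij
    simpa [f] using he₂ (show finCongr hcard i ≤ finCongr hcard j from hij)
  refine ⟨f, ?_⟩
  rw [sum_abs_sub_comp_equiv_eq_sum_layer hd hd' f]
  refine sum_congr rfl fun k _ => ?_
  rw [card_sub_card_eq_sum_layer_sub f, ← e₁.sum_comp, ← e₁.sum_comp]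
  exact sum_abs_layer_sub_of_monotone he₁ hf k

theorem isLeast_sum_abs_sub_comp_equiv (hd : ∀ x, d x ≤ M) (hd' : ∀ y, d' y ≤ M)
    (hcard : Fintype.card α = Fintype.card β) :
    IsLeast (Set.range fun f : α ≃ β => ∑ x, |(d x : ℝ) - d' (f x)|)
      (∑ k ∈ Icc 1 M, |(#{x | k ≤ d x} : ℝ) - #{y | k ≤ d' y}|) := by
  obtain ⟨f, hf⟩ := exists_sum_abs_sub_comp_equiv_eq hd hd' hcard
  exact ⟨⟨f, hf⟩, Set.forall_mem_range.2 (sum_abs_card_sub_card_le hd hd')⟩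

end Transport

namespace LGraph

variable {Lv Le : Type}

lemma padDeg_le_sup (G H : LGraph Lv Le) (x : PadV G H) :
    padDeg G H x ≤ G.verts.sup G.degree := by
  rcases x with u | _
  · exact le_sup (f := G.degree) u.2
  · exact Nat.zero_le _

lemma card_padDeg_ge {G H : LGraph Lv Le} {k : ℕ} (hk : 1 ≤ k) :
    #{x | k ≤ padDeg G H x} = #(G.verts.filter fun v => k ≤ G.degree v) := by
  rw [card_filter, card_filter, Fintype.sum_sum_type]
  simp only [padDeg, Nat.not_le.2 hk, if_false, sum_const_zero, add_zero]
  exact sum_coe_sort G.verts fun v => if k ≤ G.degree v then 1 else 0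

lemma card_padV_comm (G H : LGraph Lv Le) :
    Fintype.card (PadV G H) = Fintype.card (PadV H G) := by
  simp only [Fintype.card_sum, add_comm]

lemma sum_cdlb_eq (ce : ℝ) (G H : LGraph Lv Le) (f : PadV G H ≃ PadV H G) :
    ∑ x, cdlb ce G H x (f x) = ce / 2 * ∑ x, |(padDeg G H x : ℝ) - padDeg H G (f x)| :=
  (mul_sum ..).symm

end LGraph

open LGraph in
theorem dlb_eq_l1_of_degree_embedding_general {Lv Le : Type} (ce : ℝ) (hce : 0 ≤ ce)
    (G H : LGraph Lv Le) :
    DLB ce G H =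
      ce / 2 * ∑ k ∈ Finset.Icc 1 ((G.verts.sup G.degree) ⊔ (H.verts.sup H.degree)),
        |((G.verts.filter fun v => k ≤ G.degree v).card : ℝ)
          - ((H.verts.filter fun v => k ≤ H.degree v).card : ℝ)| := by
  set M := G.verts.sup G.degree ⊔ H.verts.sup H.degree
  have hbound := isLeast_sum_abs_sub_comp_equiv (M := M)
    (fun x => (padDeg_le_sup G H x).trans le_sup_left)
    (fun y => (padDeg_le_sup H G y).trans le_sup_right) (card_padV_comm G H)
  have hcosts : {r | ∃ f : PadV G H ≃ PadV H G, r = ∑ x, cdlb ce G H x (f x)} =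
      (ce / 2 * ·) '' Set.range fun f : PadV G H ≃ PadV H G =>
        ∑ x, |(padDeg G H x : ℝ) - padDeg H G (f x)| := by
    ext r
    simp only [Set.mem_ofPred_eq, Set.mem_image, Set.mem_range, exists_exists_eq_and, sum_cdlb_eq]
    exact exists_congr fun f => eq_comm
  have hscale : Monotone (ce / 2 * · : ℝ → ℝ) := monotone_mul_left_of_nonneg (by positivity)
  rw [DLB, oaCost, hcosts, (hscale.map_isLeast hbound).csInf_eq]
  congr 1
  refine sum_congr rfl fun k hk => ?_
  rw [card_padDeg_ge (mem_Icc.1 hk).1, card_padDeg_ge (mem_Icc.1 hk).1]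

open LGraph in
/-- For any two graphs `G` and `H` and non-negative edit costs,
`DLB(G,H) = (ce/2)·‖φ(G) − φ(H)‖₁`, where `φ(G) ∈ ℝ^Δ` is the vector whose `k`-th entry
(`1 ≤ k ≤ Δ`, `Δ` the maximum degree over `G` and `H`) is the number of vertices of `G`
with degree at least `k`. -/
theorem dlb_eq_l1_of_degree_embedding {Lv Le : Type} (ce : ℝ) (hce : 0 ≤ ce)
    (G H : LGraph Lv Le) (hG : G.WF) (hH : H.WF) :
    DLB ce G H =
      ce / 2 * ∑ k ∈ Finset.Icc 1 ((G.verts.sup G.degree) ⊔ (H.verts.sup H.degree)),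
        |((G.verts.filter fun v => k ≤ G.degree v).card : ℝ)
          - ((H.verts.filter fun v => k ≤ H.degree v).card : ℝ)| :=
  dlb_eq_l1_of_degree_embedding_general ce hce G H
end
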